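/- arXiv:2306.00508 — 3 statements merged into one kernel-verified Lean document; each statement's English description precedes it below -/
import Mathlib

section
/- Let ρ ∈ C_0^∞(ℝ³) be spherically symmetric, not identically zero, |v| < 1, and define δI^∥ := ∫ (k₂² + k₃²)/((k² − v²k₁²)k²)·|∇ρ̂(k)|² dk and δI^⊥ := ∫ (k₂² + k₃²)/((k² − v²k₂²)k²)·|∇ρ̂(k)|² dk. Then δI^∥ > 0, δI^⊥ > 0, and δI^⊥ > δI^∥ for v ≠ 0. -/
open MeasureTheory

noncomputable section

/-- Fourier transform `ρ̂(k) = (2π)^{-3/2} ∫ e^{ik·x} ρ(x) dx`. -/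
def ft1 (ρ : EuclideanSpace ℝ (Fin 3) → ℝ) (k : EuclideanSpace ℝ (Fin 3)) : ℂ :=
  (((2 * Real.pi) ^ (-(3 : ℝ) / 2) : ℝ) : ℂ) *
    ∫ x : EuclideanSpace ℝ (Fin 3),
      Complex.exp (Complex.I * ((inner ℝ x k : ℝ) : ℂ)) * (ρ x : ℂ)

/-- Squared norm of the gradient of the Fourier transform `|∇ρ̂(k)|²`. -/
def gradFTsq (ρ : EuclideanSpace ℝ (Fin 3) → ℝ) (k : EuclideanSpace ℝ (Fin 3)) : ℝ :=
  ∑ i : Fin 3, ‖fderiv ℝ (ft1 ρ) k (EuclideanSpace.single i 1)‖ ^ 2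


open Real Filter Function Topology
open scoped FourierTransform RealInnerProductSpace

namespace Stmt11Aux

abbrev E3 := EuclideanSpace ℝ (Fin 3)

def ρc (ρ : E3 → ℝ) : E3 → ℂ := fun x => ((ρ x : ℝ) : ℂ)

lemma ft1_eq (ρ : E3 → ℝ) :
    ft1 ρ = fun k => (((2 * Real.pi) ^ (-(3 : ℝ) / 2) : ℝ) : ℂ) *
      𝓕 (ρc ρ) ((-(2 * Real.pi)⁻¹ : ℝ) • k) := by
  funext k
  rw [ft1, Real.fourier_eq']
  congr 1
  refine integral_congr_ae (Filter.Eventually.of_forall fun x => ?_)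
  simp only
  have h1 : ⟪x, ((-(2 * Real.pi)⁻¹ : ℝ) • k : E3)⟫ = (-(2 * Real.pi)⁻¹ : ℝ) * ⟪x, k⟫ :=
    real_inner_smul_right _ _ _
  rw [h1]
  have hπ : (2 * Real.pi) ≠ 0 := by positivity
  rw [show -2 * π * (-(2 * Real.pi)⁻¹ * ⟪x, k⟫) = ⟪x, k⟫ by field_simp]
  rw [smul_eq_mul, mul_comm Complex.I]
  rfl

variable {ρ : E3 → ℝ}

lemma ρc_cont (hsm : ContDiff ℝ (⊤ : ℕ∞) ρ) : Continuous (ρc ρ) := Complex.continuous_ofReal.comp hsm.continuous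

lemma ρc_supp (hsupp : HasCompactSupport ρ) : HasCompactSupport (ρc ρ) := hsupp.comp_left (g := fun r : ℝ => (r : ℂ)) rfl

lemma ρc_decay (hsm : ContDiff ℝ (⊤ : ℕ∞) ρ) (hsupp : HasCompactSupport ρ) : ∀ n : ℕ, (n : ℕ∞) ≤ 1 → Integrable (fun x : E3 => ‖x‖ ^ n * ‖ρc ρ x‖) := by
  intro n _
  refine Continuous.integrable_of_hasCompactSupport ?_ ?_
  · exact (continuous_norm.pow n).mul ((ρc_cont hsm).norm)
  · exact ((ρc_supp hsupp).norm).mul_left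

lemma G_contDiff (hsm : ContDiff ℝ (⊤ : ℕ∞) ρ) (hsupp : HasCompactSupport ρ) : ContDiff ℝ 1 (𝓕 (ρc ρ)) :=
  Real.contDiff_fourier (N := 1) (fun n hn => ρc_decay hsm hsupp n hn)

lemma F_contDiff (hsm : ContDiff ℝ (⊤ : ℕ∞) ρ) (hsupp : HasCompactSupport ρ) : ContDiff ℝ 1 (ft1 ρ) := by
  rw [ft1_eq]
  exact contDiff_const.mul ((G_contDiff hsm hsupp).comp (contDiff_id.const_smul _))

lemma grad_cont (hsm : ContDiff ℝ (⊤ : ℕ∞) ρ) (hsupp : HasCompactSupport ρ) : Continuous (gradFTsq ρ) := by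
  have h := (F_contDiff hsm hsupp).continuous_fderiv one_ne_zero
  exact continuous_finset_sum _ fun i _ =>
    ((ContinuousLinearMap.apply ℝ ℂ (EuclideanSpace.single i 1)).continuous.comp h).norm.pow 2

lemma grad_nonneg (k : E3) : 0 ≤ gradFTsq ρ k :=
  Finset.sum_nonneg fun i _ => by positivity

lemma grad_ne (hsm : ContDiff ℝ (⊤ : ℕ∞) ρ) (hsupp : HasCompactSupport ρ) (hne : ρ ≠ 0) : gradFTsq ρ ≠ 0 := by
  intro h0
  -- each directional derivative vanishes
  have hd : ∀ k : E3, fderiv ℝ (ft1 ρ) k = 0 := by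
    intro k
    have hsum : gradFTsq ρ k = 0 := by rw [h0]; rfl
    have hz : ∀ i : Fin 3, fderiv ℝ (ft1 ρ) k (EuclideanSpace.single i 1) = 0 := by
      intro i
      have := (Finset.sum_eq_zero_iff_of_nonneg (fun i _ => by positivity)).mp hsum i
        (Finset.mem_univ i)
      have hn : ‖fderiv ℝ (ft1 ρ) k (EuclideanSpace.single i 1)‖ = 0 := by
        nlinarith [norm_nonneg (fderiv ℝ (ft1 ρ) k (EuclideanSpace.single i 1))]
      exact norm_eq_zero.mp hn
    ext y
    have hy : y = ∑ i : Fin 3, (y i) • EuclideanSpace.single i (1 : ℝ) := by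
      ext j
      have : (∑ x : Fin 3, y x • EuclideanSpace.single x (1:ℝ)) j
          = ∑ x : Fin 3, (y x • EuclideanSpace.single x (1:ℝ)) j :=
        by rw [WithLp.ofLp_sum, Finset.sum_apply]
      rw [this]
      simp [EuclideanSpace.single_apply]
    rw [ContinuousLinearMap.zero_apply]
    conv_lhs => rw [hy]
    rw [map_sum]
    simp [hz]
  -- hence ft1 ρ is constant
  have hconst : ∀ k : E3, ft1 ρ k = ft1 ρ 0 := by
    intro k
    exact is_const_of_fderiv_eq_zero ((F_contDiff hsm hsupp).differentiable one_ne_zero) hd k 0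
  -- hence 𝓕 (ρc ρ) is constant
  have hc0 : (((2 * Real.pi) ^ (-(3 : ℝ) / 2) : ℝ) : ℂ) ≠ 0 := by
    simp only [ne_eq, Complex.ofReal_eq_zero]
    positivity
  have ha : (-(2 * Real.pi)⁻¹ : ℝ) ≠ 0 := by
    simp only [ne_eq, neg_eq_zero, inv_eq_zero]
    positivity
  have hGconst : ∀ w : E3, 𝓕 (ρc ρ) w = 𝓕 (ρc ρ) 0 := by
    intro w
    have h1 := hconst ((-(2 * Real.pi)⁻¹ : ℝ)⁻¹ • w)
    rw [ft1_eq] at h1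
    simp only [smul_smul, mul_inv_cancel₀ ha, one_smul, smul_zero] at h1
    exact mul_left_cancel₀ hc0 h1
  -- Riemann-Lebesgue forces the constant to be zero
  have hRL : Tendsto (𝓕 (ρc ρ)) (cocompact E3) (𝓝 0) := by
    have := tendsto_integral_exp_inner_smul_cocompact (V := E3) (f := ρc ρ)
    simpa only [← Real.fourier_eq] using this
  have hG0 : 𝓕 (ρc ρ) 0 = 0 := by
    have h2 : Tendsto (𝓕 (ρc ρ)) (cocompact E3) (𝓝 (𝓕 (ρc ρ) 0)) := by
      have : (𝓕 (ρc ρ)) = fun _ => 𝓕 (ρc ρ) 0 := funext hGconst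
      rw [this]; exact tendsto_const_nhds
    exact tendsto_nhds_unique h2 hRL
  have hGzero : 𝓕 (ρc ρ) = 0 := by
    funext w; rw [hGconst w, hG0]; rfl
  -- Fourier inversion: ρ = 0
  have hint : Integrable (ρc ρ) := (ρc_cont hsm).integrable_of_hasCompactSupport (ρc_supp hsupp)
  have hinv := (ρc_cont hsm).fourierInv_fourier_eq hint (by rw [hGzero]; exact integrable_zero _ _ _)
  rw [hGzero] at hinv
  have hz : ∀ x : E3, ρc ρ x = 0 := by
    intro x
    rw [← hinv]
    simp [Real.fourierInv_eq]
  exact hne (funext fun x => by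
    have := hz x
    simpa [ρc, Complex.ofReal_eq_zero] using this)

def swA : E3 ≃ₗᵢ[ℝ] E3 :=
  LinearIsometryEquiv.piLpCongrLeft 2 ℝ ℝ (Equiv.swap (0 : Fin 3) 1)

lemma swA_apply (k : E3) (i : Fin 3) : swA k i = k (Equiv.swap (0 : Fin 3) 1 i) := by
  rw [swA, LinearIsometryEquiv.piLpCongrLeft_apply]
  simp [Equiv.piCongrLeft'_apply]

lemma swA_single (i : Fin 3) (a : ℝ) :
    swA (EuclideanSpace.single i a) = EuclideanSpace.single (Equiv.swap (0 : Fin 3) 1 i) a := by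
  rw [swA, EuclideanSpace.piLpCongrLeft_single]

variable {ρ : E3 → ℝ} {ρ₁ : ℝ → ℝ}

lemma ft1_swA (hsym : ∀ x, ρ x = ρ₁ ‖x‖) (k : E3) : ft1 ρ (swA k) = ft1 ρ k := by
  have hρA : ρc ρ ∘ swA = ρc ρ := by
    funext x
    simp only [Function.comp_apply, ρc, hsym (swA x), hsym x, swA.norm_map]
  have hGA : ∀ w : E3, 𝓕 (ρc ρ) (swA w) = 𝓕 (ρc ρ) w := by
    intro w
    rw [← Real.fourier_comp_linearIsometry swA, hρA]
  rw [ft1_eq]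
  simp only
  rw [← swA.map_smul, hGA]

lemma grad_swA (hsym : ∀ x, ρ x = ρ₁ ‖x‖) (k : E3) : gradFTsq ρ (swA k) = gradFTsq ρ k := by
  have hFA : ft1 ρ ∘ (swA.toContinuousLinearEquiv : E3 ≃L[ℝ] E3) = ft1 ρ :=
    funext fun x => ft1_swA hsym x
  have hfd : fderiv ℝ (ft1 ρ) k
      = (fderiv ℝ (ft1 ρ) (swA k)).comp (swA.toContinuousLinearEquiv : E3 →L[ℝ] E3) := by
    conv_lhs => rw [← hFA]
    exact (swA.toContinuousLinearEquiv).comp_right_fderiv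
  unfold gradFTsq
  rw [show (fun i : Fin 3 => ‖fderiv ℝ (ft1 ρ) k (EuclideanSpace.single i 1)‖ ^ 2)
      = fun i => ‖fderiv ℝ (ft1 ρ) (swA k) (EuclideanSpace.single (Equiv.swap (0:Fin 3) 1 i) 1)‖ ^ 2
    from funext fun i => by rw [hfd]; simp only [ContinuousLinearMap.coe_comp',
      Function.comp_apply, ContinuousLinearEquiv.coe_coe,
      LinearIsometryEquiv.coe_toContinuousLinearEquiv, swA_single]]
  exact Fintype.sum_equiv (Equiv.swap (0 : Fin 3) 1) _ _ (fun i => rfl) |>.symm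

lemma null_ker (l : E3 →ₗ[ℝ] ℝ) (x : E3) (hx : l x ≠ 0) :
    volume {k : E3 | l k = 0} = 0 := by
  have h1 : {k : E3 | l k = 0} = (LinearMap.ker l : Set E3) := rfl
  rw [h1]
  refine Measure.addHaar_submodule _ _ ?_
  intro h
  exact hx (by rw [← LinearMap.mem_ker, h]; trivial)

lemma null_coord1 : volume {k : E3 | k 1 = 0} = 0 :=
  null_ker (EuclideanSpace.projₗ 1) (EuclideanSpace.single 1 1) (by simp)

lemma null_sub : volume {k : E3 | k 0 - k 1 = 0} = 0 :=
  null_ker (EuclideanSpace.projₗ 0 - EuclideanSpace.projₗ 1) (EuclideanSpace.single 0 1) (by simp)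

lemma null_add : volume {k : E3 | k 0 + k 1 = 0} = 0 :=
  null_ker (EuclideanSpace.projₗ 0 + EuclideanSpace.projₗ 1) (EuclideanSpace.single 0 1) (by simp)

lemma pos_int (f gg : E3 → ℝ) (hf : Integrable f) (hnn : ∀ k, 0 ≤ f k)
    (N : Set E3) (hN : volume N = 0)
    (hsub : ∀ k, gg k ≠ 0 → k ∈ N ∨ 0 < f k)
    (hgc : Continuous gg) (hgne : gg ≠ 0) : 0 < ∫ k, f k := by
  rw [integral_pos_iff_support_of_nonneg hnn hf]
  by_contra hns
  have h1 : volume (support f) = 0 := by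
    simpa [le_zero_iff] using not_lt.mp hns
  have h2 : {k | gg k ≠ 0} ⊆ support f ∪ N := fun k hk =>
    (hsub k hk).elim Or.inr fun h => Or.inl (ne_of_gt h)
  have h3 : volume {k | gg k ≠ 0} = 0 :=
    measure_mono_null h2 (measure_union_null h1 hN)
  have h4 : gg =ᵐ[volume] 0 := by
    rw [Filter.EventuallyEq, ae_iff]
    simpa using h3
  exact hgne ((hgc.ae_eq_iff_eq volume continuous_zero).mp h4)

end Stmt11Aux

open Stmt11Aux

/-- For `ρ ∈ C_0^∞(ℝ³)` spherically symmetric, `ρ ≢ 0`, `|v| < 1`, the field contributions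
`δI^∥ = ∫ (k₂²+k₃²)/((k²-v²k₁²)k²)|∇ρ̂|² dk` and `δI^⊥ = ∫ (k₂²+k₃²)/((k²-v²k₂²)k²)|∇ρ̂|² dk`
to the effective moment of inertia satisfy `δI^∥ > 0`, `δI^⊥ > 0`, and `δI^⊥ > δI^∥` for
`v ≠ 0`. -/
theorem stmt11 (ρ : EuclideanSpace ℝ (Fin 3) → ℝ) (ρ₁ : ℝ → ℝ)
    (hsm : ContDiff ℝ (⊤ : ℕ∞) ρ) (hsupp : HasCompactSupport ρ) (hsym : ∀ x, ρ x = ρ₁ ‖x‖)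
    (hne : ρ ≠ 0) (v : ℝ) (hv : |v| < 1)
    (hint1 : Integrable (fun k : EuclideanSpace ℝ (Fin 3) =>
      ((k 1) ^ 2 + (k 2) ^ 2) / ((‖k‖ ^ 2 - v ^ 2 * (k 0) ^ 2) * ‖k‖ ^ 2) * gradFTsq ρ k))
    (hint2 : Integrable (fun k : EuclideanSpace ℝ (Fin 3) =>
      ((k 1) ^ 2 + (k 2) ^ 2) / ((‖k‖ ^ 2 - v ^ 2 * (k 1) ^ 2) * ‖k‖ ^ 2) * gradFTsq ρ k)) :
    0 < (∫ k : EuclideanSpace ℝ (Fin 3),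
        ((k 1) ^ 2 + (k 2) ^ 2) / ((‖k‖ ^ 2 - v ^ 2 * (k 0) ^ 2) * ‖k‖ ^ 2) * gradFTsq ρ k) ∧
    0 < (∫ k : EuclideanSpace ℝ (Fin 3),
        ((k 1) ^ 2 + (k 2) ^ 2) / ((‖k‖ ^ 2 - v ^ 2 * (k 1) ^ 2) * ‖k‖ ^ 2) * gradFTsq ρ k) ∧
    (v ≠ 0 →
      (∫ k : EuclideanSpace ℝ (Fin 3),
        ((k 1) ^ 2 + (k 2) ^ 2) / ((‖k‖ ^ 2 - v ^ 2 * (k 0) ^ 2) * ‖k‖ ^ 2) * gradFTsq ρ k) <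
      (∫ k : EuclideanSpace ℝ (Fin 3),
        ((k 1) ^ 2 + (k 2) ^ 2) / ((‖k‖ ^ 2 - v ^ 2 * (k 1) ^ 2) * ‖k‖ ^ 2) * gradFTsq ρ k)) := by
  have hgc : Continuous (gradFTsq ρ) := grad_cont hsm hsupp
  have hgnn : ∀ k, 0 ≤ gradFTsq ρ k := fun k => grad_nonneg k
  have hgne : gradFTsq ρ ≠ 0 := grad_ne hsm hsupp hne
  have hv2 : v ^ 2 < 1 := by rwa [sq_lt_one_iff_abs_lt_one]
  have hcoord : ∀ (k : E3) (i : Fin 3), (k i) ^ 2 ≤ ‖k‖ ^ 2 := by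
    intro k i
    have h1 : ‖k‖ ^ 2 = ∑ j, (k j) ^ 2 := by
      rw [EuclideanSpace.norm_eq,
        Real.sq_sqrt (Finset.sum_nonneg fun j _ => sq_nonneg ‖k j‖)]
      exact Finset.sum_congr rfl fun j _ => by rw [Real.norm_eq_abs, sq_abs]
    rw [h1]
    exact Finset.single_le_sum (f := fun j => (k j) ^ 2) (fun j _ => sq_nonneg _) (Finset.mem_univ i)
  have hnormpos : ∀ k : E3, k ≠ 0 → 0 < ‖k‖ ^ 2 := fun k hk => pow_pos (norm_pos_iff.mpr hk) 2
  have hD : ∀ (k : E3), k ≠ 0 → ∀ i, 0 < ‖k‖ ^ 2 - v ^ 2 * (k i) ^ 2 := by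
    intro k hk i
    have h1 := hcoord k i
    have h2 : 0 < ‖k‖ ^ 2 := hnormpos k hk
    nlinarith [sq_nonneg v, sq_nonneg (k i)]
  set f1 : E3 → ℝ := fun k =>
    ((k 1) ^ 2 + (k 2) ^ 2) / ((‖k‖ ^ 2 - v ^ 2 * (k 0) ^ 2) * ‖k‖ ^ 2) * gradFTsq ρ k with hf1
  set f2 : E3 → ℝ := fun k =>
    ((k 1) ^ 2 + (k 2) ^ 2) / ((‖k‖ ^ 2 - v ^ 2 * (k 1) ^ 2) * ‖k‖ ^ 2) * gradFTsq ρ k with hf2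
  have hnn : ∀ (j : Fin 3) (k : E3),
      0 ≤ ((k 1) ^ 2 + (k 2) ^ 2) / ((‖k‖ ^ 2 - v ^ 2 * (k j) ^ 2) * ‖k‖ ^ 2) * gradFTsq ρ k := by
    intro j k
    rcases eq_or_ne k 0 with rfl | hk
    · have : (0 : E3) 1 = 0 := rfl
      have h2 : (0 : E3) 2 = 0 := rfl
      rw [this, h2]
      norm_num
    · exact mul_nonneg (div_nonneg (by positivity)
        (le_of_lt (mul_pos (hD k hk j) (hnormpos k hk)))) (hgnn k)
  have hzero_of : ∀ k : E3, k 1 ≠ 0 → k ≠ 0 := by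
    intro k h1 h
    exact h1 (by rw [h]; rfl)
  have hs1 : ∀ k, gradFTsq ρ k ≠ 0 → k ∈ {k : E3 | k 1 = 0} ∨ 0 < f1 k := by
    intro k hgk
    by_cases h1 : k 1 = 0
    · exact Or.inl h1
    · right
      have hk : k ≠ 0 := hzero_of k h1
      have hnum : 0 < (k 1) ^ 2 + (k 2) ^ 2 := by positivity
      exact mul_pos (div_pos hnum (mul_pos (hD k hk 0) (hnormpos k hk)))
        (lt_of_le_of_ne (hgnn k) (Ne.symm hgk))
  have hs2 : ∀ k, gradFTsq ρ k ≠ 0 → k ∈ {k : E3 | k 1 = 0} ∨ 0 < f2 k := by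
    intro k hgk
    by_cases h1 : k 1 = 0
    · exact Or.inl h1
    · right
      have hk : k ≠ 0 := hzero_of k h1
      have hnum : 0 < (k 1) ^ 2 + (k 2) ^ 2 := by positivity
      exact mul_pos (div_pos hnum (mul_pos (hD k hk 1) (hnormpos k hk)))
        (lt_of_le_of_ne (hgnn k) (Ne.symm hgk))
  have hpos1 : 0 < ∫ k, f1 k :=
    pos_int f1 (gradFTsq ρ) hint1 (hnn 0) _ null_coord1 hs1 hgc hgne
  have hpos2 : 0 < ∫ k, f2 k :=
    pos_int f2 (gradFTsq ρ) hint2 (hnn 1) _ null_coord1 hs2 hgc hgne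
  refine ⟨hpos1, hpos2, fun hv0 => ?_⟩
  have hMP := swA.measurePreserving
  have hME : MeasurableEmbedding (⇑swA) := swA.toHomeomorph.measurableEmbedding
  have hint1' : Integrable (fun k => f1 (swA k)) := by
    exact (hMP.integrable_comp_emb hME).mpr hint1
  have hint2' : Integrable (fun k => f2 (swA k)) := by
    exact (hMP.integrable_comp_emb hME).mpr hint2
  set h : E3 → ℝ := fun k => f2 k + f2 (swA k) - (f1 k + f1 (swA k)) with hh
  have hinth : Integrable h := (hint2.add hint2').sub (hint1.add hint1')
  have hIc1 : (∫ k, f1 (swA k)) = ∫ k, f1 k := hMP.integral_comp hME f1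
  have hIc2 : (∫ k, f2 (swA k)) = ∫ k, f2 k := hMP.integral_comp hME f2
  have hinteg : (∫ k, h k) = 2 * (∫ k, f2 k) - 2 * (∫ k, f1 k) := by
    have h1 : Integrable (fun k => f2 k + f2 (swA k)) := hint2.add hint2'
    have h2 : Integrable (fun k => f1 k + f1 (swA k)) := hint1.add hint1'
    simp only [hh]
    calc (∫ k, (f2 k + f2 (swA k) - (f1 k + f1 (swA k))))
        = (∫ k, (f2 k + f2 (swA k))) - ∫ k, (f1 k + f1 (swA k)) := integral_sub h1 h2
      _ = ((∫ k, f2 k) + ∫ k, f2 (swA k)) - ((∫ k, f1 k) + ∫ k, f1 (swA k)) := by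
          rw [integral_add hint2 hint2', integral_add hint1 hint1']
      _ = 2 * (∫ k, f2 k) - 2 * (∫ k, f1 k) := by rw [hIc1, hIc2]; ring
  have hA0 : ∀ k : E3, swA k 0 = k 1 := fun k => by
    rw [swA_apply, Equiv.swap_apply_left]
  have hA1 : ∀ k : E3, swA k 1 = k 0 := fun k => by
    rw [swA_apply, Equiv.swap_apply_right]
  have hA2 : ∀ k : E3, swA k 2 = k 2 := fun k => by
    rw [swA_apply, Equiv.swap_apply_of_ne_of_ne (by decide) (by decide)]
  have hAn : ∀ k : E3, ‖swA k‖ = ‖k‖ := fun k => swA.norm_map k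
  have hAg : ∀ k, gradFTsq ρ (swA k) = gradFTsq ρ k := fun k => grad_swA hsym k
  have hkey : ∀ k : E3, k ≠ 0 → h k =
      gradFTsq ρ k * (v ^ 2 * ((k 0) ^ 2 - (k 1) ^ 2) ^ 2 /
        ((‖k‖ ^ 2 - v ^ 2 * (k 0) ^ 2) * (‖k‖ ^ 2 - v ^ 2 * (k 1) ^ 2) * ‖k‖ ^ 2)) := by
    intro k hk
    have d0 := hD k hk 0
    have d1 := hD k hk 1
    have hs := hnormpos k hk
    simp only [hh, hf1, hf2, hA0, hA1, hA2, hAn, hAg]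
    have d0' := d0.ne'
    have d1' := d1.ne'
    have hs' := hs.ne'
    rw [eq_comm, ← sub_eq_zero]
    field_simp
    ring
  have hnnh : ∀ k, 0 ≤ h k := by
    intro k
    rcases eq_or_ne k 0 with rfl | hk
    · have e0 : swA (0 : E3) = 0 := map_zero swA
      have z1 : (0 : E3) 1 = 0 := rfl
      have z2 : (0 : E3) 2 = 0 := rfl
      simp only [hh, hf1, hf2, e0, z1, z2]
      norm_num
    · rw [hkey k hk]
      have d0 := hD k hk 0
      have d1 := hD k hk 1
      have hs := hnormpos k hk
      have := hgnn k
      positivity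
  have hsubh : ∀ k, gradFTsq ρ k ≠ 0 →
      k ∈ ({k : E3 | k 0 - k 1 = 0} ∪ {k : E3 | k 0 + k 1 = 0}) ∨ 0 < h k := by
    intro k hgk
    by_cases h1 : k 0 - k 1 = 0
    · exact Or.inl (Or.inl h1)
    by_cases h2 : k 0 + k 1 = 0
    · exact Or.inl (Or.inr h2)
    right
    have hk : k ≠ 0 := by
      intro h0
      exact h1 (by rw [h0]; norm_num)
    have hab : (k 0) ^ 2 - (k 1) ^ 2 ≠ 0 := by
      intro hzz
      have : (k 0 - k 1) * (k 0 + k 1) = 0 := by linear_combination hzz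
      rcases mul_eq_zero.mp this with h | h
      exacts [h1 h, h2 h]
    rw [hkey k hk]
    have d0 := hD k hk 0
    have d1 := hD k hk 1
    have hs := hnormpos k hk
    have hg : 0 < gradFTsq ρ k := lt_of_le_of_ne (hgnn k) (Ne.symm hgk)
    have hnum : 0 < v ^ 2 * ((k 0) ^ 2 - (k 1) ^ 2) ^ 2 := by positivity
    exact mul_pos hg (div_pos hnum (by positivity))
  have hposh : 0 < ∫ k, h k :=
    pos_int h (gradFTsq ρ) hinth hnnh _
      (measure_union_null null_sub null_add) hsubh hgc hgne
  rw [hinteg] at hposh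
  linarith
end
end

section
/- Fix v = (t,0,0) with 0 < t < 1 and let ω = (ω₁, ω₂, 0) with ω₁ ≠ 0, ω₂ ≠ 0. Define α_j = ∫ k_j² |∇ρ̂(k)|²/(k²(k² − t²k₁²)) dk for j = 1, 2, where ρ̂ is radial (|∇ρ̂(k)|² depends only on |k|) and not identically zero. Then α₁ > α₂, and consequently the vector q = (ω₁α₁, ω₂α₂, 0) is not parallel to ω. -/
open MeasureTheory

noncomputable section

private lemma sq_coord_le (k : EuclideanSpace ℝ (Fin 3)) (j : Fin 3) :
    (k j) ^ 2 ≤ ‖k‖ ^ 2 := by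
  have h : ‖k‖ ^ 2 = ∑ i, ‖k i‖ ^ 2 := by
    rw [EuclideanSpace.norm_eq, Real.sq_sqrt]
    positivity
  rw [h]
  calc (k j) ^ 2 = ‖k j‖ ^ 2 := by rw [Real.norm_eq_abs, sq_abs]
    _ ≤ ∑ i, ‖k i‖ ^ 2 :=
        Finset.single_le_sum (f := fun i => ‖k i‖ ^ 2)
          (fun i _ => by positivity) (Finset.mem_univ j)

private lemma hyperplane_null (a b : ℝ) (hab : a ≠ 0 ∨ b ≠ 0) :
    (volume : Measure (EuclideanSpace ℝ (Fin 3)))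
      {k : EuclideanSpace ℝ (Fin 3) | a * k 0 + b * k 1 = 0} = 0 := by
  classical
  set L : EuclideanSpace ℝ (Fin 3) →ₗ[ℝ] ℝ :=
    { toFun := fun k => a * k 0 + b * k 1
      map_add' := by intro x y; simp only [PiLp.add_apply]; ring
      map_smul' := by intro c x; simp only [PiLp.smul_apply, smul_eq_mul, RingHom.id_apply]; ring }
    with hL
  have hLapp : ∀ k : EuclideanSpace ℝ (Fin 3), L k = a * k 0 + b * k 1 := fun k => rfl
  have hker : LinearMap.ker L ≠ ⊤ := by
    intro h
    rcases hab with ha | hb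
    · have hm : (EuclideanSpace.single (0 : Fin 3) (1:ℝ)) ∈ LinearMap.ker L :=
        h ▸ Submodule.mem_top
      have h' := LinearMap.mem_ker.mp hm
      rw [hLapp] at h'
      simp [EuclideanSpace.single_apply] at h'
      exact ha h'
    · have hm : (EuclideanSpace.single (1 : Fin 3) (1:ℝ)) ∈ LinearMap.ker L :=
        h ▸ Submodule.mem_top
      have h' := LinearMap.mem_ker.mp hm
      rw [hLapp] at h'
      simp [EuclideanSpace.single_apply] at h'
      exact hb h'
  have hset : {k : EuclideanSpace ℝ (Fin 3) | a * k 0 + b * k 1 = 0}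
      = (LinearMap.ker L : Set (EuclideanSpace ℝ (Fin 3))) := by
    ext k
    simp only [Set.mem_setOf_eq, SetLike.mem_coe, LinearMap.mem_ker, hLapp]
  rw [hset]
  exact Measure.addHaar_submodule _ _ hker

/-- Fix `v = (t,0,0)` with `0 < t < 1`, let `f(k) = |∇ρ̂(k)|²` be radial, nonnegative and not
a.e. zero, and set `α_j = ∫ k_j² f(k)/(k²(k² - t²k₁²)) dk` for `j = 1,2`. Then `α₁ > α₂`, and
consequently `q = (ω₁α₁, ω₂α₂, 0)` is not parallel to `ω = (ω₁, ω₂, 0)` when `ω₁ ≠ 0 ≠ ω₂`. -/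
theorem stmt12 (f : EuclideanSpace ℝ (Fin 3) → ℝ) (g : ℝ → ℝ)
    (hf0 : ∀ k, 0 ≤ f k) (hrad : ∀ k, f k = g ‖k‖)
    (hne : ¬ (f =ᵐ[(volume : Measure (EuclideanSpace ℝ (Fin 3)))] 0))
    (t : ℝ) (h0 : 0 < t) (h1 : t < 1)
    (hint : ∀ j : Fin 3, Integrable (fun k : EuclideanSpace ℝ (Fin 3) =>
      (k j) ^ 2 * f k / (‖k‖ ^ 2 * (‖k‖ ^ 2 - t ^ 2 * (k 0) ^ 2)))) :
    (∫ k : EuclideanSpace ℝ (Fin 3),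
        (k 1) ^ 2 * f k / (‖k‖ ^ 2 * (‖k‖ ^ 2 - t ^ 2 * (k 0) ^ 2))) <
      (∫ k : EuclideanSpace ℝ (Fin 3),
        (k 0) ^ 2 * f k / (‖k‖ ^ 2 * (‖k‖ ^ 2 - t ^ 2 * (k 0) ^ 2))) ∧
    ∀ ω₁ ω₂ : ℝ, ω₁ ≠ 0 → ω₂ ≠ 0 → ∀ c : ℝ,
      (![ω₁ * ∫ k : EuclideanSpace ℝ (Fin 3),
            (k 0) ^ 2 * f k / (‖k‖ ^ 2 * (‖k‖ ^ 2 - t ^ 2 * (k 0) ^ 2)),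
          ω₂ * ∫ k : EuclideanSpace ℝ (Fin 3),
            (k 1) ^ 2 * f k / (‖k‖ ^ 2 * (‖k‖ ^ 2 - t ^ 2 * (k 0) ^ 2)), 0] : Fin 3 → ℝ) ≠
        c • ![ω₁, ω₂, 0] := by
  classical
  -- the coordinate swap isometry
  set σ : EuclideanSpace ℝ (Fin 3) ≃ₗᵢ[ℝ] EuclideanSpace ℝ (Fin 3) :=
    LinearIsometryEquiv.piLpCongrLeft 2 ℝ ℝ (Equiv.swap (0:Fin 3) 1) with hσdef
  have hσ : ∀ (k : EuclideanSpace ℝ (Fin 3)) j, σ k j = k (Equiv.swap (0:Fin 3) 1 j) := by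
    intro k j
    simp [hσdef, LinearIsometryEquiv.piLpCongrLeft_apply, Equiv.piCongrLeft'_apply]
  have hσ0 : ∀ k : EuclideanSpace ℝ (Fin 3), σ k 0 = k 1 := fun k => by
    rw [hσ, Equiv.swap_apply_left]
  have hσ1 : ∀ k : EuclideanSpace ℝ (Fin 3), σ k 1 = k 0 := fun k => by
    rw [hσ, Equiv.swap_apply_right]
  have hσn : ∀ k : EuclideanSpace ℝ (Fin 3), ‖σ k‖ = ‖k‖ := σ.norm_map
  have hσf : ∀ k, f (σ k) = f k := fun k => by rw [hrad, hσn, ← hrad]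
  have mp : MeasurePreserving σ volume volume := σ.measurePreserving
  have emb : MeasurableEmbedding σ := σ.toHomeomorph.measurableEmbedding
  -- the four integrands
  set g0 : EuclideanSpace ℝ (Fin 3) → ℝ :=
    fun k => (k 0) ^ 2 * f k / (‖k‖ ^ 2 * (‖k‖ ^ 2 - t ^ 2 * (k 0) ^ 2)) with hg0
  set g1 : EuclideanSpace ℝ (Fin 3) → ℝ :=
    fun k => (k 1) ^ 2 * f k / (‖k‖ ^ 2 * (‖k‖ ^ 2 - t ^ 2 * (k 0) ^ 2)) with hg1
  set g2 : EuclideanSpace ℝ (Fin 3) → ℝ :=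
    fun k => (k 0) ^ 2 * f k / (‖k‖ ^ 2 * (‖k‖ ^ 2 - t ^ 2 * (k 1) ^ 2)) with hg2
  set g3 : EuclideanSpace ℝ (Fin 3) → ℝ :=
    fun k => (k 1) ^ 2 * f k / (‖k‖ ^ 2 * (‖k‖ ^ 2 - t ^ 2 * (k 1) ^ 2)) with hg3
  have hcomp2 : g1 ∘ σ = g2 := by
    funext k; simp only [Function.comp_apply, hg1, hg2, hσ1, hσ0, hσn, hσf]
  have hcomp3 : g0 ∘ σ = g3 := by
    funext k; simp only [Function.comp_apply, hg0, hg3, hσ0, hσn, hσf]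
  have hi0 : Integrable g0 := hint 0
  have hi1 : Integrable g1 := hint 1
  have hi2 : Integrable g2 := hcomp2 ▸ (mp.integrable_comp_emb emb).mpr hi1
  have hi3 : Integrable g3 := hcomp3 ▸ (mp.integrable_comp_emb emb).mpr hi0
  have hI2 : ∫ k, g2 k = ∫ k, g1 k := by
    rw [show (fun k => g2 k) = g1 ∘ σ from hcomp2.symm]
    exact mp.integral_comp emb g1
  have hI3 : ∫ k, g3 k = ∫ k, g0 k := by
    rw [show (fun k => g3 k) = g0 ∘ σ from hcomp3.symm]
    exact mp.integral_comp emb g0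
  -- the symmetrized nonnegative integrand
  set Q : EuclideanSpace ℝ (Fin 3) → ℝ := fun k =>
    t ^ 2 * ((k 0) ^ 2 - (k 1) ^ 2) ^ 2 * f k /
      (‖k‖ ^ 2 * (‖k‖ ^ 2 - t ^ 2 * (k 0) ^ 2) * (‖k‖ ^ 2 - t ^ 2 * (k 1) ^ 2)) with hQ
  have hden : ∀ (k : EuclideanSpace ℝ (Fin 3)) (j : Fin 3), k ≠ 0 →
      0 < ‖k‖ ^ 2 - t ^ 2 * (k j) ^ 2 := by
    intro k j hk
    have hn : 0 < ‖k‖ ^ 2 := pow_pos (norm_pos_iff.mpr hk) 2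
    have hle : t ^ 2 * (k j) ^ 2 ≤ t ^ 2 * ‖k‖ ^ 2 :=
      mul_le_mul_of_nonneg_left (sq_coord_le k j) (by positivity)
    have ht2 : t ^ 2 < 1 := by nlinarith
    nlinarith [mul_pos (sub_pos.mpr ht2) hn]
  have hpt : ∀ k, g0 k - g2 k + (g3 k - g1 k) = Q k := by
    intro k
    by_cases hk : k = 0
    · subst hk
      have hz : ∀ j : Fin 3, (0 : EuclideanSpace ℝ (Fin 3)) j = 0 := fun j => rfl
      simp only [hg0, hg1, hg2, hg3, hQ, norm_zero, hz]
      norm_num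
    · have hn : (0:ℝ) < ‖k‖ ^ 2 := pow_pos (norm_pos_iff.mpr hk) 2
      have hd0 := hden k 0 hk
      have hd1 := hden k 1 hk
      have hn' := hn.ne'
      have hd0' := hd0.ne'
      have hd1' := hd1.ne'
      simp only [hg0, hg1, hg2, hg3, hQ]
      rw [div_sub_div _ _ (mul_ne_zero hn' hd0') (mul_ne_zero hn' hd1'),
        div_sub_div _ _ (mul_ne_zero hn' hd1') (mul_ne_zero hn' hd0'),
        div_add_div _ _ (mul_ne_zero (mul_ne_zero hn' hd0') (mul_ne_zero hn' hd1'))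
          (mul_ne_zero (mul_ne_zero hn' hd1') (mul_ne_zero hn' hd0')),
        div_eq_div_iff (mul_ne_zero (mul_ne_zero (mul_ne_zero hn' hd0') (mul_ne_zero hn' hd1'))
          (mul_ne_zero (mul_ne_zero hn' hd1') (mul_ne_zero hn' hd0')))
          (mul_ne_zero (mul_ne_zero hn' hd0') hd1')]
      ring
  have hQnn : ∀ k, 0 ≤ Q k := by
    intro k
    by_cases hk : k = 0
    · subst hk; simp only [hQ, norm_zero]; norm_num
    · have hn : (0:ℝ) < ‖k‖ ^ 2 := pow_pos (norm_pos_iff.mpr hk) 2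
      have hd0 := hden k 0 hk
      have hd1 := hden k 1 hk
      exact div_nonneg
        (mul_nonneg (mul_nonneg (sq_nonneg t) (sq_nonneg _)) (hf0 k))
        (le_of_lt (mul_pos (mul_pos hn hd0) hd1))
  have hQint : Integrable Q := by
    have : Integrable (fun k => g0 k - g2 k + (g3 k - g1 k)) :=
      (hi0.sub hi2).add (hi3.sub hi1)
    exact this.congr (Filter.Eventually.of_forall hpt)
  -- the null set where the coordinates have equal squares
  have hZnull : (volume : Measure (EuclideanSpace ℝ (Fin 3)))
      {k : EuclideanSpace ℝ (Fin 3) | (k 0) ^ 2 = (k 1) ^ 2} = 0 := by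
    have hsub : {k : EuclideanSpace ℝ (Fin 3) | (k 0) ^ 2 = (k 1) ^ 2} ⊆
        {k : EuclideanSpace ℝ (Fin 3) | 1 * k 0 + (-1) * k 1 = 0} ∪
        {k : EuclideanSpace ℝ (Fin 3) | 1 * k 0 + 1 * k 1 = 0} := by
      intro k hk
      simp only [Set.mem_setOf_eq] at hk
      have hfac : (k 0 - k 1) * (k 0 + k 1) = 0 := by linear_combination hk
      rcases mul_eq_zero.mp hfac with h | h
      · left; simp only [Set.mem_setOf_eq]; linarith
      · right; simp only [Set.mem_setOf_eq]; linarith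
    refine measure_mono_null hsub (measure_union_null ?_ ?_)
    · exact hyperplane_null 1 (-1) (Or.inl one_ne_zero)
    · exact hyperplane_null 1 1 (Or.inl one_ne_zero)
  -- positivity of ∫ Q
  have hsupp : (Function.support f \ {k : EuclideanSpace ℝ (Fin 3) | (k 0) ^ 2 = (k 1) ^ 2})
      ⊆ Function.support Q := by
    intro k hk
    obtain ⟨hkf, hkz⟩ := hk
    simp only [Set.mem_setOf_eq] at hkz
    have hfk : 0 < f k := lt_of_le_of_ne (hf0 k) (Ne.symm hkf)
    have hk0 : k ≠ 0 := by
      intro h; subst h; exact hkz rfl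
    have hn : (0:ℝ) < ‖k‖ ^ 2 := pow_pos (norm_pos_iff.mpr hk0) 2
    have hd0 := hden k 0 hk0
    have hd1 := hden k 1 hk0
    have hnum : 0 < t ^ 2 * ((k 0) ^ 2 - (k 1) ^ 2) ^ 2 * f k :=
      mul_pos (mul_pos (pow_pos h0 2)
        (pow_two_pos_of_ne_zero (sub_ne_zero.mpr hkz))) hfk
    exact ne_of_gt (div_pos hnum (mul_pos (mul_pos hn hd0) hd1))
  have hsuppf : 0 < (volume : Measure (EuclideanSpace ℝ (Fin 3))) (Function.support f) := by
    rw [pos_iff_ne_zero]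
    intro h
    apply hne
    have : ∀ᵐ k : EuclideanSpace ℝ (Fin 3) ∂volume, f k = 0 := by
      rw [ae_iff]
      exact h
    exact this
  have hQpos : 0 < ∫ k, Q k := by
    rw [integral_pos_iff_support_of_nonneg hQnn hQint]
    calc (0 : ENNReal)
        < (volume : Measure (EuclideanSpace ℝ (Fin 3))) (Function.support f) := hsuppf
      _ = (volume : Measure (EuclideanSpace ℝ (Fin 3)))
            (Function.support f \ {k : EuclideanSpace ℝ (Fin 3) | (k 0) ^ 2 = (k 1) ^ 2}) :=
          (measure_diff_null hZnull).symm
      _ ≤ _ := measure_mono hsupp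
  have hIQ : ∫ k, Q k = 2 * ((∫ k, g0 k) - ∫ k, g1 k) := by
    have h1' : ∫ k, Q k = ∫ k, (g0 k - g2 k + (g3 k - g1 k)) :=
      integral_congr_ae (Filter.Eventually.of_forall fun k => (hpt k).symm)
    have hi02 : Integrable (fun k => g0 k - g2 k) volume := hi0.sub hi2
    have hi31 : Integrable (fun k => g3 k - g1 k) volume := hi3.sub hi1
    rw [h1', integral_add hi02 hi31, integral_sub hi0 hi2, integral_sub hi3 hi1, hI2, hI3]
    ring
  have hmain : (∫ k, g1 k) < ∫ k, g0 k := by nlinarith [hQpos, hIQ]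
  refine ⟨hmain, ?_⟩
  intro ω₁ ω₂ hω₁ hω₂ c heq
  have e0 := congrFun heq 0
  have e1 := congrFun heq 1
  simp only [Matrix.cons_val_zero, Matrix.cons_val_one, Matrix.head_cons, Pi.smul_apply,
    smul_eq_mul] at e0 e1
  have hα0 : (∫ k, g0 k) = c := mul_left_cancel₀ hω₁ (by rw [e0]; ring)
  have hα1 : (∫ k, g1 k) = c := mul_left_cancel₀ hω₂ (by rw [e1]; ring)
  rw [hα0, hα1] at hmain
  exact lt_irrefl _ hmain
end
end

section
/- Define, for λ ≤ 0, a₋(λ) = ν(ν_eff + λ)·∫ |∇ρ̂(k)|² sin²θ(k,γ)/(|k|² − λ) dk and a₊(λ) = (δ − λ), where ν = 1/I, ν_eff = 1/I_eff, δ = ν − ν_eff > 0, and I_eff = I + ∫ |∇ρ̂(k)|² sin²θ(k,γ)/|k|² dk (for a fixed unit vector γ, θ(k,γ) the angle between k and γ). Then a₋(0) = a₊(0), a₋ is strictly increasing and a₊ strictly decreasing on (−∞, 0], so a₋(λ) ≠ a₊(λ) for all λ < 0. -/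
open MeasureTheory

/-- With `f(k) = |∇ρ̂(k)|² sin²θ(k,γ) ≥ 0`, `J = ∫ f/|k|² dk > 0`, `ν = 1/I`,
`ν_eff = 1/(I+J)`, `δ = ν - ν_eff`, define `a₋(λ) = ν(ν_eff+λ)∫ f(k)/(|k|²-λ) dk` and
`a₊(λ) = δ - λ`. Then `a₋(0) = a₊(0)`, `a₋` is strictly increasing and `a₊` strictly
decreasing on `(-∞,0]`, hence `a₋(λ) ≠ a₊(λ)` for `λ < 0`. -/
theorem stmt15 (f : EuclideanSpace ℝ (Fin 3) → ℝ) (hf0 : ∀ k, 0 ≤ f k)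
    (hint : Integrable (fun k : EuclideanSpace ℝ (Fin 3) => f k / ‖k‖ ^ 2))
    (hJ : 0 < ∫ k : EuclideanSpace ℝ (Fin 3), f k / ‖k‖ ^ 2)
    (I : ℝ) (hI : 0 < I)
    (J ν νeff δ : ℝ) (aminus aplus : ℝ → ℝ)
    (hJdef : J = ∫ k : EuclideanSpace ℝ (Fin 3), f k / ‖k‖ ^ 2)
    (hν : ν = 1 / I) (hνeff : νeff = 1 / (I + J)) (hδ : δ = ν - νeff)
    (haminus : ∀ lam : ℝ, aminus lam =
      ν * (νeff + lam) * ∫ k : EuclideanSpace ℝ (Fin 3), f k / (‖k‖ ^ 2 - lam))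
    (haplus : ∀ lam : ℝ, aplus lam = δ - lam) :
    0 < δ ∧ aminus 0 = aplus 0 ∧ StrictMonoOn aminus (Set.Iic 0) ∧
      StrictAntiOn aplus (Set.Iic 0) ∧ ∀ lam < (0 : ℝ), aminus lam ≠ aplus lam := by
  have hJpos : 0 < J := hJdef ▸ hJ
  have hIJ : 0 < I + J := by linarith
  have hνpos : 0 < ν := by rw [hν]; positivity
  have hνeffpos : 0 < νeff := by rw [hνeff]; positivity
  have hδpos : 0 < δ := by
    rw [hδ, hν, hνeff]
    have : 1 / (I + J) < 1 / I := one_div_lt_one_div_of_lt hI (by linarith)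
    linarith
  -- the point mass at 0 is null
  have h0 : (volume : Measure (EuclideanSpace ℝ (Fin 3))) {0} = 0 := by simp
  have hae0 : ∀ᵐ k : EuclideanSpace ℝ (Fin 3), k ≠ 0 := by
    rw [ae_iff]
    convert h0 using 2
    ext k; simp
  -- f is a.e.-measurable
  have hg := hint.aestronglyMeasurable.aemeasurable
  have hfm : AEMeasurable f := by
    apply AEMeasurable.congr (hg.mul ((measurable_norm.pow_const 2).aemeasurable))
    filter_upwards [hae0] with k hk
    have : ‖k‖ ^ 2 ≠ 0 := pow_ne_zero 2 (norm_ne_zero_iff.mpr hk)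
    simp only [Pi.mul_apply]
    field_simp
  -- integrability of the shifted integrand for lam ≤ 0
  have hintlam : ∀ lam : ℝ, lam ≤ 0 →
      Integrable (fun k : EuclideanSpace ℝ (Fin 3) => f k / (‖k‖ ^ 2 - lam)) := by
    intro lam hlam
    apply hint.mono' ((hfm.div ((measurable_norm.pow_const 2).sub_const lam).aemeasurable).aestronglyMeasurable)
    filter_upwards [hae0] with k hk
    have hx : 0 < ‖k‖ ^ 2 := pow_pos (norm_pos_iff.mpr hk) 2
    have h1 : 0 < ‖k‖ ^ 2 - lam := by linarith
    simp only [Pi.div_apply]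
    rw [Real.norm_eq_abs, abs_of_nonneg (div_nonneg (hf0 k) h1.le)]
    gcongr
    · exact hf0 k
    · linarith
  -- a₋ written with constants inside
  have hrw : ∀ lam : ℝ, aminus lam =
      ν * ∫ k : EuclideanSpace ℝ (Fin 3), (νeff + lam) * (f k / (‖k‖ ^ 2 - lam)) := by
    intro lam
    rw [haminus lam, integral_const_mul, mul_assoc]
  -- strict monotonicity of a₋
  have hmono : StrictMonoOn aminus (Set.Iic 0) := by
    intro a ha b hb hab
    simp only [Set.mem_Iic] at ha hb
    rw [hrw a, hrw b]
    have hIa := (hintlam a ha).const_mul (νeff + a)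
    have hIb := (hintlam b hb).const_mul (νeff + b)
    have key : 0 < ∫ k : EuclideanSpace ℝ (Fin 3),
        ((νeff + b) * (f k / (‖k‖ ^ 2 - b)) - (νeff + a) * (f k / (‖k‖ ^ 2 - a))) := by
      rw [integral_pos_iff_support_of_nonneg_ae]
      · -- support has positive measure
        have hS : 0 < (volume : Measure (EuclideanSpace ℝ (Fin 3)))
            (Function.support (fun k : EuclideanSpace ℝ (Fin 3) => f k / ‖k‖ ^ 2)) := by
          rw [← integral_pos_iff_support_of_nonneg_ae _ hint]
          · exact hJ
          · filter_upwards with k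
            exact div_nonneg (hf0 k) (by positivity)
        refine hS.trans_le (measure_mono ?_)
        intro k hk
        simp only [Function.mem_support] at hk ⊢
        have hkne : ‖k‖ ^ 2 ≠ 0 := by
          intro h; rw [h] at hk; simp at hk
        have hx : 0 < ‖k‖ ^ 2 := lt_of_le_of_ne (by positivity) (Ne.symm hkne)
        have hfk : 0 < f k := lt_of_le_of_ne (hf0 k) (by
          intro h; rw [← h] at hk; simp at hk)
        have ha' : 0 < ‖k‖ ^ 2 - a := by linarith
        have hb' : 0 < ‖k‖ ^ 2 - b := by linarith
        have hlt : (νeff + a) / (‖k‖ ^ 2 - a) < (νeff + b) / (‖k‖ ^ 2 - b) := by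
          rw [div_lt_div_iff₀ ha' hb']
          nlinarith
        have e1 : ∀ c d : ℝ, c * (f k / d) = f k * (c / d) := fun c d => by ring
        have : (νeff + a) * (f k / (‖k‖ ^ 2 - a)) < (νeff + b) * (f k / (‖k‖ ^ 2 - b)) := by
          rw [e1, e1]
          exact mul_lt_mul_of_pos_left hlt hfk
        intro h
        rw [sub_eq_zero] at h
        exact absurd h (ne_of_gt this)
      · filter_upwards [hae0] with k hk
        have hx : 0 < ‖k‖ ^ 2 := pow_pos (norm_pos_iff.mpr hk) 2
        have ha' : 0 < ‖k‖ ^ 2 - a := by linarith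
        have hb' : 0 < ‖k‖ ^ 2 - b := by linarith
        have hle : (νeff + a) / (‖k‖ ^ 2 - a) ≤ (νeff + b) / (‖k‖ ^ 2 - b) := by
          rw [div_le_div_iff₀ ha' hb']
          nlinarith
        have e1 : ∀ c d : ℝ, c * (f k / d) = f k * (c / d) := fun c d => by ring
        have : (νeff + a) * (f k / (‖k‖ ^ 2 - a)) ≤ (νeff + b) * (f k / (‖k‖ ^ 2 - b)) := by
          rw [e1, e1]
          exact mul_le_mul_of_nonneg_left hle (hf0 k)
        simpa using this
      · exact hIb.sub hIa
    rw [integral_sub hIb hIa] at key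
    have := sub_pos.mp key
    exact mul_lt_mul_of_pos_left this hνpos
  -- a₋(0) = a₊(0)
  have heq0 : aminus 0 = aplus 0 := by
    rw [haminus 0, haplus 0]
    simp only [add_zero, sub_zero]
    rw [← hJdef, hδ, hν, hνeff]
    field_simp
    ring
  have hanti : StrictAntiOn aplus (Set.Iic 0) := by
    intro a _ b _ hab
    rw [haplus, haplus]
    linarith
  refine ⟨hδpos, heq0, hmono, hanti, ?_⟩
  intro lam hlam
  have h1 : aminus lam < aminus 0 := hmono (Set.mem_Iic.mpr hlam.le) (Set.mem_Iic.mpr le_rfl) hlam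
  have h2 : aplus 0 < aplus lam := hanti (Set.mem_Iic.mpr hlam.le) (Set.mem_Iic.mpr le_rfl) hlam
  linarith [heq0 ▸ h1]
end
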